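/- arXiv:2605.05592 — 6 statements merged into one kernel-verified Lean document; each statement's English description precedes it below -/
import Mathlib

section
/- For each q > 1/2 the sequence n ↦ P_n(q) is nondecreasing and has nonincreasing increments (discretely concave); for each q < 1/2 it is nonincreasing with nondecreasing increments (discretely convex); for q ∈ {0, 1/2, 1} it is constant. -/
open MeasureTheory

/-- Odd-budget majority accuracy: `majP n q = ℙ(Bin(2n+1,q) ≥ n+1)`. -/
noncomputable def majP (n : ℕ) (q : ℝ) : ℝ :=
  ∑ j ∈ Finset.Icc (n+1) (2*n+1), ((2*n+1).choose j : ℝ) * q^j * (1-q)^(2*n+1-j)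

/-- Upper tail of the binomial distribution. -/
noncomputable def tailF (q : ℝ) (m k : ℕ) : ℝ :=
  ∑ j ∈ Finset.Icc k m, (m.choose j : ℝ) * q^j * (1-q)^(m-j)

lemma tailF_split (q : ℝ) (m k : ℕ) (hk : k ≤ m) :
    tailF q m k = (m.choose k : ℝ) * q^k * (1-q)^(m-k) + tailF q m (k+1) := by
  unfold tailF
  have h : Finset.Icc k m = insert k (Finset.Icc (k+1) m) := by
    ext x; simp only [Finset.mem_Icc, Finset.mem_insert]; omega
  rw [h, Finset.sum_insert (by simp)]

lemma tailF_step (q : ℝ) (m k : ℕ) (hk : k ≤ m) :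
    tailF q (m+1) (k+1) = tailF q m (k+1) + q * ((m.choose k : ℝ) * q^k * (1-q)^(m-k)) := by
  unfold tailF
  have hmap : Finset.Icc (k+1) (m+1) = Finset.map (addRightEmbedding 1) (Finset.Icc k m) := by
    rw [Finset.map_add_right_Icc]
  rw [hmap, Finset.sum_map]
  simp only [addRightEmbedding_apply]
  have hterm : ∀ i ∈ Finset.Icc k m,
      ((m+1).choose (i+1) : ℝ) * q^(i+1) * (1-q)^(m+1-(i+1)) =
        q * ((m.choose i : ℝ) * q^i * (1-q)^(m-i)) +
        (1-q) * ((m.choose (i+1) : ℝ) * q^(i+1) * (1-q)^(m-(i+1))) := by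
    intro i hi
    simp only [Finset.mem_Icc] at hi
    rw [Nat.choose_succ_succ, show m+1-(i+1) = m-i from by omega]
    push_cast [Nat.succ_eq_add_one]
    rcases Nat.lt_or_ge i m with him | him
    · rw [show m - i = (m-(i+1))+1 from by omega, pow_succ]
      ring
    · have hieq : i = m := by omega
      subst hieq
      simp [Nat.choose_succ_self]
      ring
  rw [Finset.sum_congr rfl hterm, Finset.sum_add_distrib, ← Finset.mul_sum, ← Finset.mul_sum]
  -- second sum: shift index back and drop the top zero term
  have h2 : ∑ i ∈ Finset.Icc k m, (m.choose (i+1) : ℝ) * q^(i+1) * (1-q)^(m-(i+1)) =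
      ∑ j ∈ Finset.Icc (k+1) m, (m.choose j : ℝ) * q^j * (1-q)^(m-j) := by
    rcases Nat.eq_or_lt_of_le hk with h | h
    · subst h
      simp [Nat.choose_succ_self]
    · have hm1 : m - 1 + 1 = m := Nat.sub_add_cancel (by omega)
      have hL : Finset.Icc k m = Finset.Icc k (m-1+1) := by rw [hm1]
      rw [hL, Finset.sum_Icc_succ_top (by omega), hm1]
      have hz : (m.choose (m+1) : ℝ) * q^(m+1) * (1-q)^(m-(m+1)) = 0 := by
        simp [Nat.choose_succ_self]
      rw [hz, add_zero]
      have hR : Finset.Icc (k+1) m = Finset.map (addRightEmbedding 1) (Finset.Icc k (m-1)) := by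
        rw [Finset.map_add_right_Icc, hm1]
      rw [hR, Finset.sum_map]
      simp only [addRightEmbedding_apply]
  rw [h2]
  have hsplit : ∑ x ∈ Finset.Icc k m, (m.choose x : ℝ) * q^x * (1-q)^(m-x) =
      (m.choose k : ℝ) * q^k * (1-q)^(m-k) +
        ∑ x ∈ Finset.Icc (k+1) m, (m.choose x : ℝ) * q^x * (1-q)^(m-x) :=
    tailF_split q m k hk
  rw [hsplit]
  ring

/-- The fundamental increment identity. -/
lemma majP_diff (q : ℝ) (n : ℕ) :
    majP (n+1) q - majP n q
      = (2*q-1) * ((2*n+1).choose n : ℝ) * (q*(1-q))^(n+1) := by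
  have hmaj1 : majP (n+1) q = tailF q (2*n+3) (n+2) := by
    unfold majP tailF
    norm_num [show 2*(n+1)+1 = 2*n+3 by ring, show n+1+1 = n+2 by ring]
  have hmaj0 : majP n q = tailF q (2*n+1) (n+1) := rfl
  have h1 := tailF_step q (2*n+2) (n+1) (by omega)
  have h2 := tailF_step q (2*n+1) (n+1) (by omega)
  have h3 := tailF_split q (2*n+1) (n+1) (by omega)
  have e1 : 2*n+2+1 = 2*n+3 := by ring
  have e2 : 2*n+1+1 = 2*n+2 := by ring
  have e3 : n+1+1 = n+2 := by ring
  have e4 : 2*n+2-(n+1) = n+1 := by omega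
  have e5 : 2*n+1-(n+1) = n := by omega
  rw [e1, e3, e4] at h1
  rw [e2, e3, e5] at h2
  rw [e5] at h3
  have c1 : ((2*n+2).choose (n+1) : ℝ) = 2 * ((2*n+1).choose n : ℝ) := by
    have hs : (2*n+1).choose (n+1) = (2*n+1).choose n := by
      have h := Nat.choose_symm (n := 2*n+1) (k := n+1) (by omega)
      rw [show 2*n+1-(n+1) = n by omega] at h
      exact h.symm
    have : (2*n+2).choose (n+1) = (2*n+1).choose n + (2*n+1).choose (n+1) :=
      Nat.choose_succ_succ (2*n+1) n
    rw [this, hs]; push_cast; ring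
  have hs' : ((2*n+1).choose (n+1) : ℝ) = ((2*n+1).choose n : ℝ) := by
    have h := Nat.choose_symm (n := 2*n+1) (k := n+1) (by omega)
    rw [show 2*n+1-(n+1) = n by omega] at h
    exact_mod_cast congrArg (Nat.cast : ℕ → ℝ) h.symm
  rw [hmaj1, hmaj0, h1, h2, h3, c1, hs', mul_pow, pow_succ (1-q), pow_succ q]
  ring

lemma choose_ineq (n : ℕ) :
    ((n:ℝ)+1) * ((n:ℝ)+2) * ((2*n+3).choose (n+1) : ℝ)
      = (2*(n:ℝ)+2) * (2*(n:ℝ)+3) * ((2*n+1).choose n : ℝ) := by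
  have h1 := Nat.add_one_mul_choose_eq (2*n+1) n
  have h2 := Nat.add_one_mul_choose_eq (2*n+2) (n+1)
  have hsym : (2*n+3).choose (n+2) = (2*n+3).choose (n+1) := by
    have h := Nat.choose_symm (n := 2*n+3) (k := n+2) (by omega)
    rw [show 2*n+3-(n+2) = n+1 by omega] at h
    exact h.symm
  rw [show 2*n+1+1 = 2*n+2 by ring] at h1
  rw [show 2*n+2+1 = 2*n+3 by ring, show n+1+1 = n+2 by ring, hsym] at h2
  have h1' : (2*(n:ℝ)+2) * ((2*n+1).choose n : ℝ) = ((2*n+2).choose (n+1) : ℝ) * ((n:ℝ)+1) := by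
    exact_mod_cast congrArg (Nat.cast : ℕ → ℝ) h1
  have h2' : (2*(n:ℝ)+3) * ((2*n+2).choose (n+1) : ℝ) = ((2*n+3).choose (n+1) : ℝ) * ((n:ℝ)+2) := by
    exact_mod_cast congrArg (Nat.cast : ℕ → ℝ) h2
  nlinarith [h1', h2']

/-- For `q > 1/2` the sequence `n ↦ P_n(q)` is nondecreasing with nonincreasing
increments (discretely concave); for `q < 1/2` it is nonincreasing with nondecreasing
increments (discretely convex); for `q ∈ {0,1/2,1}` it is constant. -/
theorem stmt2 (q : ℝ) (hq : q ∈ Set.Icc (0:ℝ) 1) :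
    (1/2 < q →
      (∀ n : ℕ, majP n q ≤ majP (n+1) q) ∧
      (∀ n : ℕ, majP (n+2) q - majP (n+1) q ≤ majP (n+1) q - majP n q)) ∧
    (q < 1/2 →
      (∀ n : ℕ, majP (n+1) q ≤ majP n q) ∧
      (∀ n : ℕ, majP (n+1) q - majP n q ≤ majP (n+2) q - majP (n+1) q)) ∧
    (q = 0 ∨ q = 1/2 ∨ q = 1 → ∀ n : ℕ, majP n q = majP 0 q) := by
  obtain ⟨hq0, hq1⟩ := hq
  set x : ℝ := q * (1-q) with hx
  have hx0 : 0 ≤ x := mul_nonneg hq0 (by linarith)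
  have hx4 : x ≤ 1/4 := by nlinarith [sq_nonneg (q - 1/2)]
  -- key inequality: C' * x^(n+2) ≤ C * x^(n+1)
  have key : ∀ n : ℕ, ((2*(n+1)+1).choose (n+1) : ℝ) * x^(n+2)
      ≤ ((2*n+1).choose n : ℝ) * x^(n+1) := by
    intro n
    have hC := choose_ineq n
    have hCge : (0:ℝ) ≤ ((2*n+3).choose (n+1) : ℝ) := Nat.cast_nonneg _
    have hCnn : (0:ℝ) ≤ ((2*n+1).choose n : ℝ) := Nat.cast_nonneg _
    have hn : (0:ℝ) ≤ (n:ℝ) := Nat.cast_nonneg _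
    have hpos : (0:ℝ) < ((n:ℝ)+1) * ((n:ℝ)+2) := by positivity
    have hC4 : ((2*n+3).choose (n+1) : ℝ) ≤ 4 * ((2*n+1).choose n : ℝ) := by
      have hmul : ((n:ℝ)+1) * ((n:ℝ)+2) * ((2*n+3).choose (n+1) : ℝ)
          ≤ ((n:ℝ)+1) * ((n:ℝ)+2) * (4 * ((2*n+1).choose n : ℝ)) := by
        rw [hC]
        nlinarith [mul_nonneg hn hCnn]
      exact le_of_mul_le_mul_left (by linarith [hmul]) hpos
    have hxp : (0:ℝ) ≤ x^(n+1) := pow_nonneg hx0 _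
    have h1 : ((2*n+3).choose (n+1) : ℝ) * x ≤ ((2*n+1).choose n : ℝ) := by nlinarith
    calc ((2*(n+1)+1).choose (n+1) : ℝ) * x^(n+2)
        = (((2*n+3).choose (n+1) : ℝ) * x) * x^(n+1) := by
          rw [show 2*(n+1)+1 = 2*n+3 by ring, pow_succ]; ring
      _ ≤ ((2*n+1).choose n : ℝ) * x^(n+1) := mul_le_mul_of_nonneg_right h1 hxp
  refine ⟨?_, ?_, ?_⟩
  · intro hqh
    have hpos : 0 < 2*q - 1 := by linarith
    constructor
    · intro n
      have h := majP_diff q n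
      have : 0 ≤ (2*q-1) * ((2*n+1).choose n : ℝ) * x^(n+1) := by
        apply mul_nonneg (mul_nonneg (le_of_lt hpos) (Nat.cast_nonneg _)) (pow_nonneg hx0 _)
      linarith [h, this]
    · intro n
      have h1 := majP_diff q n
      have h2 := majP_diff q (n+1)
      rw [h1, h2]
      have := key n
      calc (2*q-1) * ((2*(n+1)+1).choose (n+1) : ℝ) * x^((n+1)+1)
          = (2*q-1) * (((2*(n+1)+1).choose (n+1) : ℝ) * x^(n+2)) := by ring
        _ ≤ (2*q-1) * (((2*n+1).choose n : ℝ) * x^(n+1)) :=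
            mul_le_mul_of_nonneg_left (key n) (le_of_lt hpos)
        _ = (2*q-1) * ((2*n+1).choose n : ℝ) * x^(n+1) := by ring
  · intro hql
    have hneg : 2*q - 1 < 0 := by linarith
    constructor
    · intro n
      have h := majP_diff q n
      have : (2*q-1) * ((2*n+1).choose n : ℝ) * x^(n+1) ≤ 0 := by
        have := mul_nonneg (Nat.cast_nonneg ((2*n+1).choose n) : (0:ℝ) ≤ _) (pow_nonneg hx0 (n+1))
        nlinarith
      linarith [h, this]
    · intro n
      have h1 := majP_diff q n
      have h2 := majP_diff q (n+1)
      rw [h1, h2]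
      calc (2*q-1) * ((2*n+1).choose n : ℝ) * x^(n+1)
          = (2*q-1) * (((2*n+1).choose n : ℝ) * x^(n+1)) := by ring
        _ ≤ (2*q-1) * (((2*(n+1)+1).choose (n+1) : ℝ) * x^(n+2)) :=
            mul_le_mul_of_nonpos_left (key n) (le_of_lt hneg)
        _ = (2*q-1) * ((2*(n+1)+1).choose (n+1) : ℝ) * x^((n+1)+1) := by ring
  · intro hcase n
    have hdiff : ∀ m : ℕ, majP (m+1) q = majP m q := by
      intro m
      have h := majP_diff q m
      have hz : (2*q-1) * ((2*m+1).choose m : ℝ) * (q*(1-q))^(m+1) = 0 := by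
        rcases hcase with h0 | h12 | h1
        · subst h0; simp
        · subst h12; norm_num
        · subst h1; simp
      linarith [h, hz]
    induction n with
    | zero => rfl
    | succ k ih => rw [hdiff k, ih]
end

section
/- For any probability measure Π on [0,1] with voting curve V_n(Π) = ∫ P_n(q) dΠ(q) and signed voting signature ω_Π defined as the pushforward of (2q−1)·Π under q ↦ q(1−q), one has V_0(Π) = (1 + ω_Π([0,1/4]))/2 and V_{n+1}(Π) − V_n(Π) = C(2n+1, n+1) · ∫_{[0,1/4]} r^{n+1} dω_Π(r) for all n ≥ 0. -/
open MeasureTheory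

/-- Population voting curve. -/
noncomputable def voteV (μ : Measure ℝ) (n : ℕ) : ℝ := ∫ q, majP n q ∂μ

lemma aux_fin (μ : Measure ℝ) [IsFiniteMeasure μ] (g : ℝ → ℝ) (hg : ∀ q ∈ Set.Icc (0:ℝ) 1, g q ≤ 1) :
    IsFiniteMeasure ((μ.restrict (Set.Icc 0 1)).withDensity (fun q => ENNReal.ofReal (g q))) := by
  apply isFiniteMeasure_withDensity
  have h : ∫⁻ q, ENNReal.ofReal (g q) ∂(μ.restrict (Set.Icc 0 1)) ≤ ∫⁻ _, 1 ∂(μ.restrict (Set.Icc 0 1)) := by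
    refine setLIntegral_mono' measurableSet_Icc fun q hq => ?_
    simpa using ENNReal.ofReal_le_one.2 (hg q hq)
  refine ne_of_lt (lt_of_le_of_lt h ?_)
  simp [lintegral_one]

/-- Signed voting signature as a signed measure on ℝ (carried on [0,1/4]). -/
noncomputable def signature (μ : Measure ℝ) [IsFiniteMeasure μ] : SignedMeasure ℝ :=
  letI h1 := aux_fin μ (fun q => 2*q-1) (by intro q hq; simp only [Set.mem_Icc] at hq; linarith [hq.2])
  letI h2 := aux_fin μ (fun q => 1-2*q) (by intro q hq; simp only [Set.mem_Icc] at hq; linarith [hq.1])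
  (((μ.restrict (Set.Icc 0 1)).withDensity (fun q => ENNReal.ofReal (2*q-1))).map
      (fun q => q*(1-q))).toSignedMeasure
  - (((μ.restrict (Set.Icc 0 1)).withDensity (fun q => ENNReal.ofReal (1-2*q))).map
      (fun q => q*(1-q))).toSignedMeasure

/-- Integral of a real function against a signed measure, via the Jordan decomposition. -/
noncomputable def sInt {α : Type*} [MeasurableSpace α] (s : SignedMeasure α) (f : α → ℝ) : ℝ :=
  (∫ a, f a ∂s.toJordanDecomposition.posPart) - ∫ a, f a ∂s.toJordanDecomposition.negPart

/-- Limiting majority accuracy. -/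
noncomputable def voteVinf (μ : Measure ℝ) : ℝ :=
  (μ (Set.Ioc (1/2 : ℝ) 1)).toReal + (1/2) * (μ {(1/2 : ℝ)}).toReal

/-- Total-variation norm of the signed voting signature. -/
noncomputable def sigTV (μ : Measure ℝ) [IsFiniteMeasure μ] : ℝ :=
  ((signature μ).totalVariation Set.univ).toReal

/-!
Adding two voters to a jury of `2n+1` changes the majority verdict only when the first `2n+1`
votes split `n+1 : n` (both new votes against flip it, probability `(1-q)²`) or `n : n+1` (both
for flip it, probability `q²`). Since `C(2n+1,n) = C(2n+1,n+1)` this gives the pointwise identity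
`P_{n+1}(q) - P_n(q) = C(2n+1,n+1) (2q-1) (q(1-q))^{n+1}`, and `P_0(q) = q = (1 + (2q-1))/2`.
Integrating against `Π` and pushing `(2q-1) dΠ` forward along `q ↦ q(1-q)` turns the right-hand
sides into moments of `ω_Π`; the Jordan decomposition of a difference `a - b` of finite measures is
`(a - b, b - a)`, so the Jordan-part integral `sInt` of `a - b` is `∫ ∂a - ∫ ∂b`.
-/

section BinomialTail

open Finset

variable {R : Type*} [CommSemiring R] (q p : R)

def binomialTail (m k : ℕ) : R := ∑ j ∈ Icc k m, (m.choose j : R) * q ^ j * p ^ (m - j)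

theorem binomialTail_eq_add_binomialTail_succ {m k : ℕ} (hk : k ≤ m) :
    binomialTail q p m k = m.choose k * q ^ k * p ^ (m - k) + binomialTail q p m (k + 1) := by
  rw [binomialTail, Icc_eq_cons_Ioc hk, sum_cons, ← Icc_add_one_left_eq_Ioc]
  rfl

theorem binomialTail_succ_succ (m k : ℕ) :
    binomialTail q p (m + 1) (k + 1) = q * binomialTail q p m k + p * binomialTail q p m (k + 1) := by
  have shift : ∀ F : ℕ → R, ∑ j ∈ Icc (k + 1) (m + 1), F j = ∑ i ∈ Icc k m, F (i + 1) := by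
    intro F
    rw [← map_add_right_Icc, sum_map]
    rfl
  have hpTail : p * binomialTail q p m (k + 1) =
      ∑ j ∈ Icc (k + 1) (m + 1), (m.choose j : R) * q ^ j * p ^ (m + 1 - j) := by
    rw [binomialTail, mul_sum]
    refine (sum_subset (Icc_subset_Icc_right m.le_succ) fun j hj hj' => ?_).symm.trans
      (sum_congr rfl fun j hj => ?_) |>.symm
    · simp only [mem_Icc, not_and, not_le] at hj hj'
      simp [Nat.choose_eq_zero_of_lt (hj' hj.1)]
    · rw [show m + 1 - j = m - j + 1 by grind]
      ring
  rw [hpTail, binomialTail, shift, shift, binomialTail, mul_sum, ← sum_add_distrib]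
  refine sum_congr rfl fun i _ => ?_
  rw [Nat.choose_succ_succ, Nat.add_sub_add_right]
  push_cast
  ring

end BinomialTail

theorem majP_eq_binomialTail (n : ℕ) (q : ℝ) :
    majP n q = binomialTail q (1 - q) (2 * n + 1) (n + 1) := rfl

theorem majP_zero (q : ℝ) : majP 0 q = q := by
  simp [majP]

theorem continuous_majP (n : ℕ) : Continuous (majP n) := by
  unfold majP
  fun_prop

theorem majP_succ_sub_majP (n : ℕ) (q : ℝ) :
    majP (n + 1) q - majP n q = (2 * n + 1).choose (n + 1) * (2 * q - 1) * (q * (1 - q)) ^ (n + 1) := by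
  -- Pascal's rule twice (one voter at a time) and peeling off the tie terms; `q + (1 - q) = 1`.
  have h₁ := binomialTail_succ_succ q (1 - q) (2 * n + 2) (n + 1)
  have h₁' := binomialTail_eq_add_binomialTail_succ q (1 - q) (show n + 1 ≤ 2 * n + 2 by omega)
  have h₂ := binomialTail_succ_succ q (1 - q) (2 * n + 1) (n + 1)
  have h₃ := binomialTail_eq_add_binomialTail_succ q (1 - q) (show n + 1 ≤ 2 * n + 1 by omega)
  have hc : ((2 * n + 2).choose (n + 1) : ℝ) = 2 * (2 * n + 1).choose (n + 1) := by
    rw [Nat.choose_succ_succ, ← Nat.choose_symm_half]; push_cast; ring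
  rw [hc, show 2 * n + 2 - (n + 1) = n + 1 by omega] at h₁'
  rw [show 2 * n + 1 - (n + 1) = n by omega] at h₃
  rw [majP_eq_binomialTail, majP_eq_binomialTail, mul_pow]
  linear_combination h₁ + q * h₁' + h₂ - (1 - q) * h₃

section JordanIntegral

variable {α : Type*} [MeasurableSpace α]

theorem sInt_indicator_one (s : SignedMeasure α) {S : Set α} (hS : MeasurableSet S) :
    sInt s (S.indicator 1) = s S := by
  conv_rhs => rw [← s.toSignedMeasure_toJordanDecomposition]
  rw [sInt, integral_indicator_one hS, integral_indicator_one hS, JordanDecomposition.toSignedMeasure,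
    Measure.toSignedMeasure_sub_apply hS]

theorem sInt_toSignedMeasure_sub (a b : Measure α) [IsFiniteMeasure a] [IsFiniteMeasure b]
    {f : α → ℝ} (ha : Integrable f a) (hb : Integrable f b) :
    sInt (a.toSignedMeasure - b.toSignedMeasure) f = ∫ x, f x ∂a - ∫ x, f x ∂b := by
  have hsum : a - b + b = b - a + a := by
    have h := Measure.sub_toSignedMeasure_eq_toSignedMeasure_sub (μ := a) (ν := b)
    rw [sub_eq_sub_iff_add_eq_add] at h
    rw [← Measure.toSignedMeasure_eq_toSignedMeasure_iff, Measure.toSignedMeasure_add,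
      Measure.toSignedMeasure_add, ← h, add_comm]
  have key := congrArg (fun ν => ∫ x, f x ∂ν) hsum
  rw [integral_add_measure (ha.mono_measure Measure.sub_le) hb,
    integral_add_measure (hb.mono_measure Measure.sub_le) ha] at key
  rw [sInt, Measure.toJordanDecomposition_toSignedMeasure_sub]
  simp only [Measure.jordanDecompositionOfToSignedMeasureSub_posPart,
    Measure.jordanDecompositionOfToSignedMeasureSub_negPart]
  linarith

end JordanIntegral

section PushforwardDensity

variable {α β : Type*} [MeasurableSpace α] [MeasurableSpace β] {ρ : Measure α} {c : α → ℝ}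
  {g : α → β} {f : β → ℝ}

theorem integral_map_withDensity_ofReal (hc : Measurable c) (hg : Measurable g) (hf : Measurable f) :
    ∫ y, f y ∂((ρ.withDensity fun x => ENNReal.ofReal (c x)).map g)
      = ∫ x, max (c x) 0 * f (g x) ∂ρ := by
  rw [integral_map hg.aemeasurable hf.aestronglyMeasurable]
  -- `ENNReal.ofReal r = ↑r.toNNReal` and `(r.toNNReal : ℝ) = max r 0` hold by definition.
  exact (integral_withDensity_eq_integral_smul hc.real_toNNReal _).trans rfl

theorem integrable_map_withDensity_ofReal_iff (hc : Measurable c) (hg : Measurable g)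
    (hf : Measurable f) :
    Integrable f ((ρ.withDensity fun x => ENNReal.ofReal (c x)).map g)
      ↔ Integrable (fun x => max (c x) 0 * f (g x)) ρ := by
  rw [integrable_map_measure hf.aestronglyMeasurable hg.aemeasurable]
  exact (integrable_withDensity_iff_integrable_smul hc.real_toNNReal).trans Iff.rfl

end PushforwardDensity

theorem mapsTo_mul_one_sub : Set.MapsTo (fun q : ℝ => q * (1 - q)) (Set.Icc 0 1) (Set.Icc 0 (1 / 4)) :=
  fun q ⟨h₀, h₁⟩ => ⟨by nlinarith, by nlinarith [sq_nonneg (q - 1 / 2)]⟩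

theorem sInt_signature (μ : Measure ℝ) [IsFiniteMeasure μ] {f : ℝ → ℝ} (hfm : Measurable f)
    (hf : ContinuousOn f (Set.Icc 0 (1 / 4))) :
    sInt (signature μ) f = ∫ q in Set.Icc 0 1, (2 * q - 1) * f (q * (1 - q)) ∂μ := by
  have hg : Measurable fun q : ℝ => q * (1 - q) := by fun_prop
  have hint : ∀ c : ℝ → ℝ, Continuous c →
      Integrable (fun q => max (c q) 0 * f (q * (1 - q))) (μ.restrict (Set.Icc 0 1)) := fun c hc =>
    ((hc.max continuous_const).continuousOn.mul
      (hf.comp (by fun_prop) mapsTo_mul_one_sub)).integrableOn_compact isCompact_Icc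
  have hc₁ : Continuous fun q : ℝ => 2 * q - 1 := by fun_prop
  have hc₂ : Continuous fun q : ℝ => 1 - 2 * q := by fun_prop
  have := aux_fin μ (fun q => 2 * q - 1) fun q hq => by linarith [hq.2]
  have := aux_fin μ (fun q => 1 - 2 * q) fun q hq => by linarith [hq.1]
  rw [signature, sInt_toSignedMeasure_sub _ _
      ((integrable_map_withDensity_ofReal_iff hc₁.measurable hg hfm).2 (hint _ hc₁))
      ((integrable_map_withDensity_ofReal_iff hc₂.measurable hg hfm).2 (hint _ hc₂)),
    integral_map_withDensity_ofReal hc₁.measurable hg hfm,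
    integral_map_withDensity_ofReal hc₂.measurable hg hfm, ← integral_sub (hint _ hc₁) (hint _ hc₂)]
  refine integral_congr_ae (ae_of_all _ fun q => ?_)
  dsimp only
  rw [← sub_mul, show 1 - 2 * q = -(2 * q - 1) by ring, max_zero_sub_max_neg_zero_eq_self]

theorem signature_apply_Icc_zero_quarter (μ : Measure ℝ) [IsFiniteMeasure μ] :
    signature μ (Set.Icc 0 (1 / 4)) = ∫ q in Set.Icc 0 1, (2 * q - 1) ∂μ := by
  rw [← sInt_indicator_one _ measurableSet_Icc, sInt_signature μ
    (measurable_one.indicator measurableSet_Icc)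
    ((continuousOn_const (c := (1 : ℝ))).congr fun r hr => Set.indicator_of_mem hr 1)]
  refine setIntegral_congr_fun measurableSet_Icc fun q hq => ?_
  rw [Set.indicator_of_mem (mapsTo_mul_one_sub hq), Pi.one_apply, mul_one]

theorem voteV_eq_setIntegral {μ : Measure ℝ} (hμ : μ (Set.Icc 0 1)ᶜ = 0) (n : ℕ) :
    voteV μ n = ∫ q in Set.Icc 0 1, majP n q ∂μ := by
  rw [voteV, Measure.restrict_eq_self_of_ae_mem (s := Set.Icc 0 1) (mem_ae_iff.2 hμ)]

theorem voteV_succ_sub_voteV {μ : Measure ℝ} [IsFiniteMeasure μ] (hμ : μ (Set.Icc 0 1)ᶜ = 0)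
    (n : ℕ) : voteV μ (n + 1) - voteV μ n =
      (2 * n + 1).choose (n + 1) * ∫ q in Set.Icc 0 1, (2 * q - 1) * (q * (1 - q)) ^ (n + 1) ∂μ := by
  rw [voteV_eq_setIntegral hμ, voteV_eq_setIntegral hμ, ← integral_const_mul,
    ← integral_sub (continuous_majP _).integrableOn_Icc (continuous_majP _).integrableOn_Icc]
  simp only [majP_succ_sub_majP, mul_assoc]

/-- The odd-budget curve starts at `V₀ = (1+ω([0,1/4]))/2` and its increments are
signed Hausdorff moments of the signed voting signature. -/
theorem stmt3 (μ : Measure ℝ) [IsProbabilityMeasure μ] (hμ : μ (Set.Icc (0:ℝ) 1)ᶜ = 0) :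
    voteV μ 0 = (1 + signature μ (Set.Icc (0:ℝ) (1/4))) / 2 ∧
    ∀ n : ℕ, voteV μ (n+1) - voteV μ n =
      ((2*n+1).choose (n+1) : ℝ) * sInt (signature μ) (fun r => r^(n+1)) := by
  constructor
  · have hmass : μ.real (Set.Icc 0 1) = 1 := by
      rw [measureReal_def, (prob_compl_eq_zero_iff measurableSet_Icc).1 hμ, ENNReal.toReal_one]
    have hid : IntegrableOn (fun q : ℝ => q) (Set.Icc 0 1) μ := continuous_id.integrableOn_Icc
    rw [voteV_eq_setIntegral hμ, signature_apply_Icc_zero_quarter,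
      integral_sub (hid.const_mul 2) (integrableOn_const measure_Icc_lt_top.ne), integral_const_mul,
      setIntegral_const, hmass]
    simp only [majP_zero, smul_eq_mul, mul_one]
    ring
  · intro n
    rw [voteV_succ_sub_voteV hμ, sInt_signature μ (by fun_prop) (by fun_prop)]
end

section
/- For any probability measure Π on [0,1], the signed voting signature satisfies ω_Π({1/4}) = 0 and ∫_{[0,1/4)} (1−4r)^{−1/2} d|ω_Π|(r) ≤ 1. -/
/-!
Writing `f q = q(1-q)`, the signature is the difference of the pushforwards under `f` of
`(2q-1)₊ Π` and `(1-2q)₊ Π`, so its total variation is dominated by the pushforward of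
`|2q-1| Π`. Since `1 - 4 f q = (2q-1)²`, the kernel pulled back along `f` is `|2q-1|⁻¹`, which
cancels the density, and the integral is at most `Π [0,1] = 1`. The only preimage of `1/4` is
`q = 1/2`, where the density vanishes, so there is no atom at `1/4`.
-/

open MeasureTheory

namespace MeasureTheory.SignedMeasure

theorem totalVariation_toSignedMeasure_sub_le {α : Type*} [MeasurableSpace α]
    (a b : Measure α) [IsFiniteMeasure a] [IsFiniteMeasure b] :
    (a.toSignedMeasure - b.toSignedMeasure).totalVariation ≤ a + b := by
  rw [totalVariation_eq_variation]
  refine VectorMeasure.variation_le_of_forall_enorm_le fun E hE => ?_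
  rw [Measure.toSignedMeasure_sub_apply hE, Measure.add_apply]
  calc ‖a.real E - b.real E‖ₑ ≤ ‖a.real E‖ₑ + ‖b.real E‖ₑ := enorm_sub_le
    _ = a E + b E := by
      simp only [measureReal_def, Real.enorm_toReal (measure_ne_top _ _)]

end MeasureTheory.SignedMeasure

namespace ENNReal

theorem ofReal_add_ofReal_neg (x : ℝ) :
    ENNReal.ofReal x + ENNReal.ofReal (-x) = ENNReal.ofReal |x| := by
  rcases le_total 0 x with hx | hx
  · rw [ofReal_of_nonpos (neg_nonpos.2 hx), add_zero, abs_of_nonneg hx]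
  · rw [ofReal_of_nonpos hx, zero_add, abs_of_nonpos hx]

theorem ofReal_mul_ofReal_inv_le_one (x : ℝ) :
    ENNReal.ofReal x * ENNReal.ofReal x⁻¹ ≤ 1 := by
  rcases le_or_gt x 0 with hx | hx
  · simp [ofReal_of_nonpos hx]
  · rw [← ofReal_mul hx.le, mul_inv_cancel₀ hx.ne', ofReal_one]

end ENNReal

noncomputable def absSignature (μ : Measure ℝ) : Measure ℝ :=
  ((μ.restrict (Set.Icc 0 1)).withDensity fun q => ENNReal.ofReal |2*q-1|).map fun q => q*(1-q)

theorem totalVariation_signature_le (μ : Measure ℝ) [IsFiniteMeasure μ] :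
    (signature μ).totalVariation ≤ absSignature μ := by
  have := aux_fin μ (fun q => 2*q-1) fun q hq => by linarith [hq.2]
  have := aux_fin μ (fun q => 1-2*q) fun q hq => by linarith [hq.1]
  refine (SignedMeasure.totalVariation_toSignedMeasure_sub_le _ _).trans_eq ?_
  rw [← Measure.map_add _ _ (by fun_prop), ← withDensity_add_left (by fun_prop)]
  congr with q
  rw [Pi.add_apply, ← neg_sub (2*q) 1, ENNReal.ofReal_add_ofReal_neg]

theorem preimage_mul_one_sub_singleton_quarter :
    (fun q : ℝ => q*(1-q)) ⁻¹' {1/4} = {1/2} := by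
  ext q
  simp only [Set.mem_preimage, Set.mem_singleton_iff]
  constructor
  · intro h; nlinarith [sq_nonneg (2*q-1)]
  · rintro rfl; norm_num

theorem absSignature_singleton_quarter (μ : Measure ℝ) : absSignature μ {1/4} = 0 := by
  rw [absSignature, Measure.map_apply (by fun_prop) (measurableSet_singleton _),
    preimage_mul_one_sub_singleton_quarter, withDensity_apply _ (measurableSet_singleton _),
    lintegral_singleton]
  norm_num

theorem lintegral_inv_sqrt_absSignature_le (μ : Measure ℝ) :
    ∫⁻ r, ENNReal.ofReal (Real.sqrt (1 - 4*r))⁻¹ ∂absSignature μ ≤ μ (Set.Icc 0 1) := by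
  rw [absSignature, lintegral_map (by fun_prop) (by fun_prop),
    lintegral_withDensity_eq_lintegral_mul _ (by fun_prop) (by fun_prop)]
  calc _ ≤ ∫⁻ _, 1 ∂μ.restrict (Set.Icc 0 1) := lintegral_mono fun q => by
        have hsq : 1 - 4*(q*(1-q)) = (2*q-1)^2 := by ring
        simpa only [Pi.mul_apply, hsq, Real.sqrt_sq_eq_abs] using
          ENNReal.ofReal_mul_ofReal_inv_le_one |2*q-1|
    _ = μ (Set.Icc 0 1) := by rw [lintegral_one, Measure.restrict_apply_univ]

theorem stmt6_general (μ : Measure ℝ) [IsProbabilityMeasure μ] :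
    signature μ {(1/4 : ℝ)} = 0 ∧
    ∫⁻ r in Set.Ico (0:ℝ) (1/4), ENNReal.ofReal (Real.sqrt (1 - 4*r))⁻¹
        ∂(signature μ).totalVariation ≤ 1 := by
  have htv := totalVariation_signature_le μ
  refine ⟨(signature μ).null_of_totalVariation_zero ?_, ?_⟩
  · exact nonpos_iff_eq_zero.1 ((htv _).trans_eq (absSignature_singleton_quarter μ))
  calc _ ≤ ∫⁻ r, ENNReal.ofReal (Real.sqrt (1 - 4*r))⁻¹ ∂(signature μ).totalVariation :=
        setLIntegral_le_lintegral _ _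
    _ ≤ ∫⁻ r, ENNReal.ofReal (Real.sqrt (1 - 4*r))⁻¹ ∂absSignature μ :=
        lintegral_mono' htv le_rfl
    _ ≤ μ (Set.Icc 0 1) := lintegral_inv_sqrt_absSignature_le μ
    _ ≤ 1 := prob_le_one

/-- The signed voting signature has no atom at `1/4` and its total variation integrates
the singular kernel `(1−4r)^{−1/2}` to at most one on `[0,1/4)`. -/
theorem stmt6 (μ : Measure ℝ) [IsProbabilityMeasure μ] (hμ : μ (Set.Icc (0:ℝ) 1)ᶜ = 0) :
    signature μ {(1/4 : ℝ)} = 0 ∧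
    ∫⁻ r in Set.Ico (0:ℝ) (1/4), ENNReal.ofReal (Real.sqrt (1 - 4*r))⁻¹
        ∂(signature μ).totalVariation ≤ 1 :=
  stmt6_general μ
end

section
/- Let μ be a finite signed Borel measure on [0,1/4] with μ({1/4}) = 0 and ∫_{[0,1/4)} (1−4r)^{−1/2} d|μ|(r) ≤ 1. Then there exists a probability measure Π on [0,1] whose signed voting signature equals μ. -/
/-!
Every `r ∈ [0, 1/4)` has the two preimages `q₊(r) ≥ 1/2 ≥ q₋(r)` under `q ↦ q(1-q)`, and
`|2q - 1| = √(1 - 4r)` at both. Push the Jordan parts `ν⁺`, `ν⁻` forward along `q₊`, `q₋` after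
weighting them by `(1 - 4r)^(-1/2)`: the signature weight `2q - 1` (resp. `1 - 2q`) cancels this
weight on its own branch and vanishes on the other, so the positive and negative parts of the
signature are exactly `ν⁺` and `ν⁻`. The support hypotheses make `|ν|` live on `[0, 1/4)`, the
integral hypothesis says the two pushed measures have total mass at most one, and the missing
mass is put at `q = 1/2`, where the signature weight is zero.
-/

open MeasureTheory

open Set
open scoped ENNReal

namespace MeasureTheory

variable {α β : Type*} [MeasurableSpace α] [MeasurableSpace β]

theorem withDensity_map_eq_map_withDensity_comp (μ : Measure α) {f : α → β} (hf : Measurable f)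
    {g : β → ℝ≥0∞} (hg : Measurable g) :
    (μ.map f).withDensity g = (μ.withDensity (g ∘ f)).map f := by
  ext s hs
  rw [withDensity_apply _ hs, Measure.map_apply hf hs, setLIntegral_map hs hg hf,
    withDensity_apply _ (hf hs)]
  rfl

theorem withDensity_map_eq_zero (μ : Measure α) {f : α → β} (hf : Measurable f)
    {g : β → ℝ≥0∞} (hg : Measurable g) (h : ∀ᵐ x ∂μ, g (f x) = 0) :
    (μ.map f).withDensity g = 0 := by
  rw [withDensity_map_eq_map_withDensity_comp μ hf hg,
    withDensity_congr_ae (f := g ∘ f) (g := 0) h, withDensity_zero, Measure.map_zero]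

theorem map_withDensity_map_withDensity_eq_self (ρ : Measure α) {w : α → ℝ≥0∞} {f : α → β}
    {g : β → ℝ≥0∞} {φ : β → α} (hw : Measurable w) (hf : Measurable f) (hg : Measurable g)
    (hφ : Measurable φ) (hwg : ∀ᵐ x ∂ρ, w x * g (f x) = 1) (hφf : ∀ᵐ x ∂ρ, φ (f x) = x) :
    (((ρ.withDensity w).map f).withDensity g).map φ = ρ := by
  rw [withDensity_map_eq_map_withDensity_comp _ hf hg, ← withDensity_mul _ hw (hg.comp hf),
    withDensity_congr_ae (f := w * (g ∘ f)) (g := 1) hwg, withDensity_one, Measure.map_map hφ hf,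
    Measure.map_congr (f := φ ∘ f) (g := id) hφf, Measure.map_id]

theorem SignedMeasure.totalVariation_eq_zero_of_forall_subset (s : SignedMeasure α) {S : Set α}
    (hS : MeasurableSet S) (h : ∀ B, MeasurableSet B → B ⊆ S → s B = 0) :
    s.totalVariation S = 0 := by
  obtain ⟨i, hi, hpos_le, hneg_le, hpos, hneg⟩ := s.toJordanDecomposition_spec
  rw [SignedMeasure.totalVariation, Measure.add_apply, hpos, hneg,
    SignedMeasure.toMeasureOfZeroLE_apply _ hpos_le hi hS,
    SignedMeasure.toMeasureOfLEZero_apply _ hneg_le hi.compl hS]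
  simp [h _ (hi.inter hS) inter_subset_right, h _ (hi.compl.inter hS) inter_subset_right]

theorem SignedMeasure.ae_totalVariation_mem_Ico (ν : SignedMeasure ℝ)
    (hcar : ∀ B : Set ℝ, MeasurableSet B → B ⊆ (Icc (0 : ℝ) (1 / 4))ᶜ → ν B = 0)
    (hatom : ν {(1 / 4 : ℝ)} = 0) :
    ∀ᵐ r ∂ν.totalVariation, r ∈ Ico (0 : ℝ) (1 / 4) := by
  have hout := ν.totalVariation_eq_zero_of_forall_subset measurableSet_Icc.compl hcar
  have hend := ν.totalVariation_eq_zero_of_forall_subset (measurableSet_singleton (1 / 4 : ℝ))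
    fun B _ hB => by rcases subset_singleton_iff_eq.1 hB with rfl | rfl; exacts [ν.empty, hatom]
  change ν.totalVariation (Ico (0 : ℝ) (1 / 4))ᶜ = 0
  rw [← Icc_sdiff_right, Set.sdiff_eq, compl_inter, compl_compl]
  exact measure_union_null hout hend

end MeasureTheory

noncomputable def upperRoot (r : ℝ) : ℝ := (1 + √(1 - 4 * r)) / 2

noncomputable def lowerRoot (r : ℝ) : ℝ := (1 - √(1 - 4 * r)) / 2

noncomputable def branchDensity (r : ℝ) : ℝ≥0∞ := ENNReal.ofReal (√(1 - 4 * r))⁻¹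

@[fun_prop] theorem measurable_upperRoot : Measurable upperRoot := by
  unfold upperRoot; fun_prop

@[fun_prop] theorem measurable_lowerRoot : Measurable lowerRoot := by
  unfold lowerRoot; fun_prop

@[fun_prop] theorem measurable_branchDensity : Measurable branchDensity := by
  unfold branchDensity; fun_prop

theorem two_mul_upperRoot_sub_one (r : ℝ) : 2 * upperRoot r - 1 = √(1 - 4 * r) := by
  unfold upperRoot; ring

theorem one_sub_two_mul_lowerRoot (r : ℝ) : 1 - 2 * lowerRoot r = √(1 - 4 * r) := by
  unfold lowerRoot; ring

theorem upperRoot_mul_one_sub {r : ℝ} (hr : r ≤ 1 / 4) : upperRoot r * (1 - upperRoot r) = r := by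
  have := Real.mul_self_sqrt (by linarith : 0 ≤ 1 - 4 * r)
  unfold upperRoot; linear_combination -this / 4

theorem lowerRoot_mul_one_sub {r : ℝ} (hr : r ≤ 1 / 4) : lowerRoot r * (1 - lowerRoot r) = r := by
  have := Real.mul_self_sqrt (by linarith : 0 ≤ 1 - 4 * r)
  unfold lowerRoot; linear_combination -this / 4

theorem sqrt_one_sub_four_mul_le_one {r : ℝ} (hr : 0 ≤ r) : √(1 - 4 * r) ≤ 1 :=
  Real.sqrt_le_one.2 (by linarith)

theorem upperRoot_mem_Icc {r : ℝ} (hr : 0 ≤ r) : upperRoot r ∈ Icc (0 : ℝ) 1 := by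
  have := sqrt_one_sub_four_mul_le_one hr
  have := Real.sqrt_nonneg (1 - 4 * r)
  constructor <;> unfold upperRoot <;> linarith

theorem lowerRoot_mem_Icc {r : ℝ} (hr : 0 ≤ r) : lowerRoot r ∈ Icc (0 : ℝ) 1 := by
  have := sqrt_one_sub_four_mul_le_one hr
  have := Real.sqrt_nonneg (1 - 4 * r)
  constructor <;> unfold lowerRoot <;> linarith

theorem branchDensity_mul_ofReal_sqrt {r : ℝ} (hr : r < 1 / 4) :
    branchDensity r * ENNReal.ofReal √(1 - 4 * r) = 1 := by
  have : 0 < √(1 - 4 * r) := Real.sqrt_pos.2 (by linarith)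
  rw [branchDensity, ← ENNReal.ofReal_mul (by positivity), inv_mul_cancel₀ this.ne',
    ENNReal.ofReal_one]

noncomputable def signaturePart (g : ℝ → ℝ) (μ : Measure ℝ) : Measure ℝ :=
  (μ.withDensity fun q => ENNReal.ofReal (g q)).map fun q => q * (1 - q)

theorem signaturePart_add (g : ℝ → ℝ) (μ ν : Measure ℝ) :
    signaturePart g (μ + ν) = signaturePart g μ + signaturePart g ν := by
  rw [signaturePart, withDensity_add_measure, Measure.map_add _ _ (by fun_prop)]
  rfl

theorem signaturePart_smul (g : ℝ → ℝ) (c : ℝ≥0∞) (μ : Measure ℝ) :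
    signaturePart g (c • μ) = c • signaturePart g μ := by
  rw [signaturePart, withDensity_smul_measure, Measure.map_smul]
  rfl

theorem signaturePart_dirac_of_nonpos {g : ℝ → ℝ} {a : ℝ} (ha : g a ≤ 0) :
    signaturePart g (Measure.dirac a) = 0 := by
  rw [signaturePart, dirac_withDensity, ENNReal.ofReal_eq_zero.2 ha, zero_smul,
    Measure.map_zero]

theorem signature_eq_toSignedMeasure_sub {μ : Measure ℝ} [IsFiniteMeasure μ]
    (hμ : ∀ᵐ q ∂μ, q ∈ Icc (0 : ℝ) 1) {P N : Measure ℝ} [IsFiniteMeasure P] [IsFiniteMeasure N]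
    (hP : signaturePart (fun q => 2 * q - 1) μ = P)
    (hN : signaturePart (fun q => 1 - 2 * q) μ = N) :
    signature μ = P.toSignedMeasure - N.toSignedMeasure := by
  rw [← Measure.restrict_eq_self_of_ae_mem hμ] at hP hN
  subst hP hN
  rfl

noncomputable def upperLift (ρ : Measure ℝ) : Measure ℝ :=
  (ρ.withDensity branchDensity).map upperRoot

noncomputable def lowerLift (ρ : Measure ℝ) : Measure ℝ :=
  (ρ.withDensity branchDensity).map lowerRoot

theorem upperLift_apply_univ (ρ : Measure ℝ) : upperLift ρ univ = ∫⁻ r, branchDensity r ∂ρ := by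
  rw [upperLift, Measure.map_apply measurable_upperRoot MeasurableSet.univ, preimage_univ,
    withDensity_apply _ MeasurableSet.univ, Measure.restrict_univ]

theorem lowerLift_apply_univ (ρ : Measure ℝ) : lowerLift ρ univ = ∫⁻ r, branchDensity r ∂ρ := by
  rw [lowerLift, Measure.map_apply measurable_lowerRoot MeasurableSet.univ, preimage_univ,
    withDensity_apply _ MeasurableSet.univ, Measure.restrict_univ]

theorem ae_mem_Icc_upperLift {ρ : Measure ℝ} (hρ : ∀ᵐ r ∂ρ, 0 ≤ r) :
    ∀ᵐ q ∂upperLift ρ, q ∈ Icc (0 : ℝ) 1 := by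
  rw [upperLift, ae_map_iff (p := (· ∈ Icc (0 : ℝ) 1)) measurable_upperRoot.aemeasurable
    measurableSet_Icc]
  filter_upwards [(withDensity_absolutelyContinuous ρ _).ae_le hρ] with r hr
  exact upperRoot_mem_Icc hr

theorem ae_mem_Icc_lowerLift {ρ : Measure ℝ} (hρ : ∀ᵐ r ∂ρ, 0 ≤ r) :
    ∀ᵐ q ∂lowerLift ρ, q ∈ Icc (0 : ℝ) 1 := by
  rw [lowerLift, ae_map_iff (p := (· ∈ Icc (0 : ℝ) 1)) measurable_lowerRoot.aemeasurable
    measurableSet_Icc]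
  filter_upwards [(withDensity_absolutelyContinuous ρ _).ae_le hρ] with r hr
  exact lowerRoot_mem_Icc hr

theorem signaturePart_upperLift_pos {ρ : Measure ℝ} (hρ : ∀ᵐ r ∂ρ, r < 1 / 4) :
    signaturePart (fun q => 2 * q - 1) (upperLift ρ) = ρ := by
  refine map_withDensity_map_withDensity_eq_self ρ measurable_branchDensity measurable_upperRoot
    (by fun_prop) (by fun_prop) ?_ ?_ <;> filter_upwards [hρ] with r hr
  · rw [two_mul_upperRoot_sub_one, branchDensity_mul_ofReal_sqrt hr]
  · exact upperRoot_mul_one_sub hr.le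

theorem signaturePart_lowerLift_neg {ρ : Measure ℝ} (hρ : ∀ᵐ r ∂ρ, r < 1 / 4) :
    signaturePart (fun q => 1 - 2 * q) (lowerLift ρ) = ρ := by
  refine map_withDensity_map_withDensity_eq_self ρ measurable_branchDensity measurable_lowerRoot
    (by fun_prop) (by fun_prop) ?_ ?_ <;> filter_upwards [hρ] with r hr
  · rw [one_sub_two_mul_lowerRoot, branchDensity_mul_ofReal_sqrt hr]
  · exact lowerRoot_mul_one_sub hr.le

theorem signaturePart_upperLift_neg (ρ : Measure ℝ) :
    signaturePart (fun q => 1 - 2 * q) (upperLift ρ) = 0 := by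
  rw [signaturePart, upperLift, withDensity_map_eq_zero _ measurable_upperRoot (by fun_prop),
    Measure.map_zero]
  refine ae_of_all _ fun r => ENNReal.ofReal_eq_zero.2 ?_
  linarith [two_mul_upperRoot_sub_one r, Real.sqrt_nonneg (1 - 4 * r)]

theorem signaturePart_lowerLift_pos (ρ : Measure ℝ) :
    signaturePart (fun q => 2 * q - 1) (lowerLift ρ) = 0 := by
  rw [signaturePart, lowerLift, withDensity_map_eq_zero _ measurable_lowerRoot (by fun_prop),
    Measure.map_zero]
  refine ae_of_all _ fun r => ENNReal.ofReal_eq_zero.2 ?_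
  linarith [one_sub_two_mul_lowerRoot r, Real.sqrt_nonneg (1 - 4 * r)]

/-- Realizability: any finite signed Borel measure carried on `[0,1/4]` with no atom at
`1/4` and singular-kernel variation integral at most one is the signed voting signature
of some probability law on `[0,1]`. -/
theorem stmt7 (ν : SignedMeasure ℝ)
    (hcar : ∀ B : Set ℝ, MeasurableSet B → B ⊆ (Set.Icc (0:ℝ) (1/4))ᶜ → ν B = 0)
    (hatom : ν {(1/4 : ℝ)} = 0)
    (hint : ∫⁻ r in Set.Ico (0:ℝ) (1/4), ENNReal.ofReal (Real.sqrt (1 - 4*r))⁻¹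
        ∂ν.totalVariation ≤ 1) :
    ∃ (μ : Measure ℝ) (_ : IsFiniteMeasure μ), IsProbabilityMeasure μ ∧
      μ (Set.Icc (0:ℝ) 1)ᶜ = 0 ∧ signature μ = ν := by
  set P := ν.toJordanDecomposition.posPart
  set N := ν.toJordanDecomposition.negPart
  have hK := ν.ae_totalVariation_mem_Ico hcar hatom
  have hP : ∀ᵐ r ∂P, r ∈ Ico (0 : ℝ) (1 / 4) :=
    (Measure.absolutelyContinuous_of_le (Measure.le_add_right le_rfl)).ae_le hK
  have hN : ∀ᵐ r ∂N, r ∈ Ico (0 : ℝ) (1 / 4) :=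
    (Measure.absolutelyContinuous_of_le (Measure.le_add_left le_rfl)).ae_le hK
  set t := ∫⁻ r, branchDensity r ∂P + ∫⁻ r, branchDensity r ∂N
  have ht : t ≤ 1 := by
    rwa [Measure.restrict_eq_self_of_ae_mem hK, SignedMeasure.totalVariation,
      lintegral_add_measure] at hint
  let μ := upperLift P + lowerLift N + (1 - t) • Measure.dirac (1 / 2 : ℝ)
  have hμ : ∀ᵐ q ∂μ, q ∈ Icc (0 : ℝ) 1 := by
    simp only [μ, ae_add_measure_iff]
    refine ⟨⟨ae_mem_Icc_upperLift (hP.mono fun r hr => hr.1),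
      ae_mem_Icc_lowerLift (hN.mono fun r hr => hr.1)⟩,
      Measure.ae_smul_measure ((ae_dirac_iff measurableSet_Icc).2 (by norm_num)) _⟩
  have hprob : IsProbabilityMeasure μ := ⟨by
    simp only [μ, Measure.add_apply, Measure.smul_apply, upperLift_apply_univ,
      lowerLift_apply_univ, measure_univ, smul_eq_mul, mul_one]
    exact add_tsub_cancel_of_le ht⟩
  refine ⟨μ, inferInstance, hprob, ae_iff.1 hμ, ?_⟩
  rw [← ν.toSignedMeasure_toJordanDecomposition]
  refine signature_eq_toSignedMeasure_sub hμ ?_ ?_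
  · rw [signaturePart_add, signaturePart_add, signaturePart_smul, signaturePart_upperLift_pos
      (hP.mono fun r hr => hr.2), signaturePart_lowerLift_pos,
      signaturePart_dirac_of_nonpos (by norm_num), smul_zero, add_zero, add_zero]
  · rw [signaturePart_add, signaturePart_add, signaturePart_smul, signaturePart_lowerLift_neg
      (hN.mono fun r hr => hr.2), signaturePart_upperLift_neg,
      signaturePart_dirac_of_nonpos (by norm_num), smul_zero, add_zero, zero_add]
end

section
/- Suppose a probability measure Π on [0,1] satisfies the local margin condition Π(|Q − 1/2| ≤ t) ≤ C t^κ for all 0 < t < t₀, with constants C, κ > 0 and t₀ ∈ (0,1/2]. Then for M = 2n+1, |V_n(Π) − V_∞(Π)| ≤ exp(−2M t₀²) + C Γ(1 + κ/2) (2M)^{−κ/2}. -/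
/-!
By Hoeffding's inequality, `|P_n(q) - P_∞(q)| ≤ exp(-2M(q - 1/2)²)` on `[0, 1]`, where `P_∞` is
the indicator of `q > 1/2` except that `P_∞(1/2) = 1/2`, which equals `P_n(1/2)` by the symmetry
`P_n(q) + P_n(1 - q) = 1`. Writing `exp(-a x²) = ∫_{s ≥ x} 2as e^{-as²} ds` with `a = 2M` and
applying Tonelli,
`∫ exp(-a (Q - 1/2)²) dΠ = ∫ Π(|Q - 1/2| ≤ s) 2as e^{-as²} ds`.
For `s ≥ t₀` the probability is at most `1`, contributing `exp(-a t₀²)`; for `s < t₀` it is at most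
`C s^κ`, contributing the Gamma integral `C Γ(1 + κ/2) a^{-κ/2}`.
-/
open MeasureTheory

open ProbabilityTheory Real Set Filter Topology
open scoped ENNReal

theorem one_sub_add_mul_exp_le {p : ℝ} (hp : p ∈ Icc (0:ℝ) 1) (t : ℝ) :
    1 - p + p * exp t ≤ exp (p * t + t ^ 2 / 8) := by
  set μ : Measure ℝ := Ber(1, 0, ⟨p, hp⟩)
  have hmean : μ[id] = p := by simp [μ, integral_bernoulliMeasure]
  have hbdd : ∀ᵐ x ∂μ, id x ∈ Icc (0:ℝ) 1 :=
    ae_iff.2 (bernoulliMeasure_apply_of_notMem_of_notMem _ measurableSet_Icc.compl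
      (by simp) (by simp))
  have hmgf : p * exp (t * (1 - p)) + (1 - p) * exp (-(t * p)) ≤ exp (t ^ 2 / 8) := by
    have h := (hasSubgaussianMGF_of_mem_Icc aemeasurable_id hbdd).mgf_le t
    simp only [hmean, mgf, μ, integral_bernoulliMeasure] at h
    convert h using 2 <;> norm_num
    ring
  have e1 : exp (p * t) * exp (t * (1 - p)) = exp t := by rw [← exp_add]; ring_nf
  have e2 : exp (p * t) * exp (-(t * p)) = 1 := by rw [← exp_add, ← exp_zero]; ring_nf
  calc 1 - p + p * exp t
      = exp (p * t) * (p * exp (t * (1 - p)) + (1 - p) * exp (-(t * p))) := by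
        linear_combination (-p) * e1 - (1 - p) * e2
    _ ≤ exp (p * t) * exp (t ^ 2 / 8) := by gcongr
    _ = exp (p * t + t ^ 2 / 8) := by rw [← exp_add]

theorem sum_Icc_choose_mul_pow_le_exp_mul {m k : ℕ} {p : ℝ} (hp : p ∈ Icc (0:ℝ) 1) {l : ℝ}
    (hl : 0 ≤ l) :
    ∑ j ∈ Finset.Icc k m, (m.choose j : ℝ) * p ^ j * (1 - p) ^ (m - j)
      ≤ exp (-(l * k)) * (p * exp l + (1 - p)) ^ m := by
  have hp0 := hp.1
  have hq : 0 ≤ 1 - p := sub_nonneg.2 hp.2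
  rw [add_pow, Finset.mul_sum]
  refine (Finset.sum_le_sum fun j hj => ?_).trans
    (Finset.sum_le_sum_of_subset_of_nonneg
      (fun j hj => by simp only [Finset.mem_Icc, Finset.mem_range] at hj ⊢; omega)
      fun j _ _ => by positivity)
  have hkj : (k : ℝ) ≤ j := by exact_mod_cast (Finset.mem_Icc.1 hj).1
  calc (m.choose j : ℝ) * p ^ j * (1 - p) ^ (m - j)
      ≤ (m.choose j : ℝ) * p ^ j * (1 - p) ^ (m - j) * exp (l * (j - k)) :=
        le_mul_of_one_le_right (by positivity) (one_le_exp (by nlinarith))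
    _ = exp (-(l * k)) * ((p * exp l) ^ j * (1 - p) ^ (m - j) * m.choose j) := by
        rw [mul_pow, ← exp_nat_mul, show l * (j - k) = -(l * k) + j * l by ring, exp_add]
        ring

theorem sum_Icc_choose_mul_pow_le_exp_neg_sq {m k : ℕ} (hm : 0 < m) {p : ℝ}
    (hp : p ∈ Icc (0:ℝ) 1) (hk : m * p ≤ k) :
    ∑ j ∈ Finset.Icc k m, (m.choose j : ℝ) * p ^ j * (1 - p) ^ (m - j)
      ≤ exp (-2 * (k - m * p) ^ 2 / m) := by
  have hm' : (0:ℝ) < m := by exact_mod_cast hm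
  -- `l` minimises the exponent `-l (k - m p) + m l² / 8`.
  set l := 4 * (k - m * p) / m with hl_def
  have hl : 0 ≤ l := div_nonneg (by linarith) hm'.le
  calc _ ≤ exp (-(l * k)) * (p * exp l + (1 - p)) ^ m := sum_Icc_choose_mul_pow_le_exp_mul hp hl
    _ ≤ exp (-(l * k)) * exp (p * l + l ^ 2 / 8) ^ m := by
        gcongr
        · nlinarith [hp.1, hp.2, exp_pos l]
        · linarith [one_sub_add_mul_exp_le hp l]
    _ = exp (-2 * (k - m * p) ^ 2 / m) := by
        rw [← exp_nat_mul, ← exp_add, hl_def]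
        congr 1
        field_simp
        ring

theorem integral_rpow_mul_mul_exp_neg_mul_sq {a κ : ℝ} (ha : 0 < a) (hκ : -2 < κ) :
    ∫ s in Ioi 0, s ^ κ * (2 * a * s * exp (-a * s ^ 2))
      = Gamma (1 + κ / 2) * a ^ (-(κ / 2)) := by
  have hrw : ∀ s ∈ Ioi (0:ℝ), s ^ κ * (2 * a * s * exp (-a * s ^ 2))
      = 2 * a * (s ^ (κ + 1) * exp (-a * s ^ (2:ℝ))) := by
    intro s hs
    rw [rpow_add hs, rpow_one, rpow_two]
    ring
  rw [setIntegral_congr_fun measurableSet_Ioi hrw, integral_const_mul,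
    integral_rpow_mul_exp_neg_mul_rpow two_pos (by linarith) ha,
    show (κ + 1 + 1) / 2 = 1 + κ / 2 by ring, show -(κ + 1 + 1) / 2 = -(κ / 2) - 1 by ring,
    rpow_sub_one ha.ne']
  field_simp

theorem integrableOn_rpow_mul_mul_exp_neg_mul_sq {a κ : ℝ} (ha : 0 < a) (hκ : -2 < κ) :
    IntegrableOn (fun s => s ^ κ * (2 * a * s * exp (-a * s ^ 2))) (Ioi 0) := by
  refine Integrable.of_integral_ne_zero ?_
  rw [integral_rpow_mul_mul_exp_neg_mul_sq ha hκ]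
  have := Gamma_pos_of_pos (show 0 < 1 + κ / 2 by linarith)
  positivity

theorem ofReal_exp_neg_mul_sq_eq_lintegral {a x : ℝ} (ha : 0 < a) (hx : 0 ≤ x) :
    ENNReal.ofReal (exp (-a * x ^ 2))
      = ∫⁻ s in Ici x, ENNReal.ofReal (2 * a * s * exp (-a * s ^ 2)) := by
  have hderiv : ∀ s ∈ Ici x,
      HasDerivAt (fun s => -exp (-a * s ^ 2)) (2 * a * s * exp (-a * s ^ 2)) s := fun s _ =>
    (((hasDerivAt_pow 2 s).const_mul (-a)).exp.neg).congr_deriv (by ring)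
  have hnonneg : ∀ s ∈ Ioi x, 0 ≤ 2 * a * s * exp (-a * s ^ 2) := fun s hs => by
    have : 0 < s := hx.trans_lt hs
    positivity
  have hlim : Tendsto (fun s => -exp (-a * s ^ 2)) atTop (𝓝 0) := by
    have : Tendsto (fun s : ℝ => -a * s ^ 2) atTop atBot :=
      (tendsto_pow_atTop two_ne_zero).const_mul_atTop_of_neg (neg_neg_of_pos ha)
    simpa using (tendsto_exp_atBot.comp this).neg
  rw [← setLIntegral_congr Ioi_ae_eq_Ici, ← ofReal_integral_eq_lintegral_ofReal
    (integrableOn_Ioi_deriv_of_nonneg' hderiv hnonneg hlim)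
    ((ae_restrict_iff' measurableSet_Ioi).2 (Eventually.of_forall hnonneg)),
    integral_Ioi_of_hasDerivAt_of_nonneg' hderiv hnonneg hlim]
  simp

theorem lintegral_setLIntegral_Ici {α : Type*} [MeasurableSpace α] (μ : Measure α) [SFinite μ]
    {f : α → ℝ} (hf : Measurable f) {h : ℝ → ℝ≥0∞} (hh : Measurable h) :
    ∫⁻ ω, (∫⁻ s in Ici (f ω), h s) ∂μ = ∫⁻ s, μ {ω | f ω ≤ s} * h s := by
  set F : α × ℝ → ℝ≥0∞ := {p | f p.1 ≤ p.2}.indicator (h ∘ Prod.snd)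
  have hF : Measurable F :=
    (hh.comp measurable_snd).indicator (measurableSet_le (hf.comp measurable_fst) measurable_snd)
  calc ∫⁻ ω, (∫⁻ s in Ici (f ω), h s) ∂μ = ∫⁻ ω, (∫⁻ s, F (ω, s)) ∂μ := by
        congr 1 with ω
        rw [← lintegral_indicator measurableSet_Ici]
        rfl
    _ = ∫⁻ s, ∫⁻ ω, F (ω, s) ∂μ := lintegral_lintegral_swap hF.aemeasurable
    _ = ∫⁻ s, μ {ω | f ω ≤ s} * h s := by
        congr 1 with s
        rw [mul_comm, ← lintegral_indicator_const (measurableSet_le hf measurable_const)]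
        rfl

theorem setLIntegral_Iio_measure_le_mul_le {α : Type*} [MeasurableSpace α] (μ : Measure α)
    [IsFiniteMeasure μ] {f : α → ℝ} {a C κ t₀ : ℝ} (ha : 0 < a) (hC : 0 ≤ C)
    (hκ : -2 < κ)
    (hmargin : ∀ t, 0 < t → t < t₀ → μ.real {ω | f ω ≤ t} ≤ C * t ^ κ) :
    ∫⁻ s in Iio t₀, μ {ω | f ω ≤ s} * ENNReal.ofReal (2 * a * s * exp (-a * s ^ 2))
      ≤ ENNReal.ofReal (C * Gamma (1 + κ / 2) * a ^ (-(κ / 2))) := by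
  set g : ℝ → ℝ := fun s => 2 * a * s * exp (-a * s ^ 2)
  have hpointwise : ∀ s ∈ Iio t₀, μ {ω | f ω ≤ s} * ENNReal.ofReal (g s)
      ≤ (Ioi 0).indicator (fun s => ENNReal.ofReal (C * (s ^ κ * g s))) s := by
    intro s hs
    rcases le_or_gt s 0 with hs0 | hs0
    · have : g s ≤ 0 :=
        mul_nonpos_of_nonpos_of_nonneg (mul_nonpos_of_nonneg_of_nonpos (by positivity) hs0)
          (exp_pos _).le
      simp [ENNReal.ofReal_of_nonpos this]
    rw [indicator_of_mem (mem_Ioi.2 hs0), ← mul_assoc,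
      ENNReal.ofReal_mul (p := C * s ^ κ) (by positivity), ← ofReal_measureReal]
    exact mul_le_mul_left (ENNReal.ofReal_le_ofReal (hmargin s hs0 hs)) _
  have hnonneg : 0 ≤ᵐ[volume.restrict (Ioi 0)] fun s => C * (s ^ κ * g s) :=
    (ae_restrict_iff' measurableSet_Ioi).2 (Eventually.of_forall fun s (hs : 0 < s) => by
      positivity)
  calc ∫⁻ s in Iio t₀, μ {ω | f ω ≤ s} * ENNReal.ofReal (g s)
      ≤ ∫⁻ s in Iio t₀,
          (Ioi 0).indicator (fun s => ENNReal.ofReal (C * (s ^ κ * g s))) s :=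
        setLIntegral_mono' measurableSet_Iio hpointwise
    _ ≤ ∫⁻ s in Ioi 0, ENNReal.ofReal (C * (s ^ κ * g s)) := by
        rw [← lintegral_indicator measurableSet_Ioi]
        exact setLIntegral_le_lintegral _ _
    _ = ENNReal.ofReal (C * Gamma (1 + κ / 2) * a ^ (-(κ / 2))) := by
        rw [← ofReal_integral_eq_lintegral_ofReal
          ((integrableOn_rpow_mul_mul_exp_neg_mul_sq ha hκ).const_mul C) hnonneg,
          integral_const_mul, integral_rpow_mul_mul_exp_neg_mul_sq ha hκ, mul_assoc]

theorem integral_exp_neg_mul_sq_le_of_margin {α : Type*} [MeasurableSpace α] (μ : Measure α)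
    [IsProbabilityMeasure μ] {f : α → ℝ} (hf : Measurable f) (hf0 : ∀ ω, 0 ≤ f ω)
    {a C κ t₀ : ℝ} (ha : 0 < a) (hC : 0 ≤ C) (hκ : -2 < κ) (ht₀ : 0 ≤ t₀)
    (hmargin : ∀ t, 0 < t → t < t₀ → μ.real {ω | f ω ≤ t} ≤ C * t ^ κ) :
    ∫ ω, exp (-a * f ω ^ 2) ∂μ
      ≤ exp (-a * t₀ ^ 2) + C * Gamma (1 + κ / 2) * a ^ (-(κ / 2)) := by
  set R := C * Gamma (1 + κ / 2) * a ^ (-(κ / 2))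
  set G : ℝ → ℝ≥0∞ := fun s =>
    μ {ω | f ω ≤ s} * ENNReal.ofReal (2 * a * s * exp (-a * s ^ 2))
  have hR : 0 ≤ R := by
    have := Gamma_pos_of_pos (show 0 < 1 + κ / 2 by linarith)
    positivity
  have hfar : ∫⁻ s in Ici t₀, G s ≤ ENNReal.ofReal (exp (-a * t₀ ^ 2)) := by
    rw [ofReal_exp_neg_mul_sq_eq_lintegral ha ht₀]
    exact lintegral_mono fun s => mul_le_of_le_one_left' prob_le_one
  have hbound : ∫⁻ ω, ENNReal.ofReal (exp (-a * f ω ^ 2)) ∂μ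
      ≤ ENNReal.ofReal (exp (-a * t₀ ^ 2)) + ENNReal.ofReal R :=
    calc ∫⁻ ω, ENNReal.ofReal (exp (-a * f ω ^ 2)) ∂μ = ∫⁻ s, G s := by
          simp_rw [ofReal_exp_neg_mul_sq_eq_lintegral ha (hf0 _)]
          exact lintegral_setLIntegral_Ici μ hf (by fun_prop)
      _ = (∫⁻ s in Ici t₀, G s) + ∫⁻ s in Iio t₀, G s := by
          rw [← compl_Ici]
          exact (lintegral_add_compl _ measurableSet_Ici).symm
      _ ≤ _ := add_le_add hfar (setLIntegral_Iio_measure_le_mul_le μ ha hC hκ hmargin)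
  rw [integral_eq_lintegral_of_nonneg_ae (Eventually.of_forall fun _ => (exp_pos _).le)
    (by fun_prop)]
  calc _ ≤ (ENNReal.ofReal (exp (-a * t₀ ^ 2)) + ENNReal.ofReal R).toReal :=
        ENNReal.toReal_mono (by finiteness) hbound
    _ = _ := by
        rw [ENNReal.toReal_add ENNReal.ofReal_ne_top ENNReal.ofReal_ne_top,
          ENNReal.toReal_ofReal (exp_pos _).le, ENNReal.toReal_ofReal hR]

theorem majP_add_majP_one_sub (n : ℕ) (q : ℝ) : majP n q + majP n (1 - q) = 1 := by
  set m := 2 * n + 1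
  set b : ℕ → ℝ := fun j => (m.choose j : ℝ) * q ^ j * (1 - q) ^ (m - j)
  have hIcc : Finset.Icc (n + 1) m = Finset.Ico (n + 1) (m + 1) := rfl
  have hreflect : majP n (1 - q) = ∑ j ∈ Finset.range (n + 1), b j := by
    have h := Finset.sum_Ico_reflect b (n + 1) (le_refl (m + 1))
    rw [Nat.sub_self, show m + 1 - (n + 1) = n + 1 by omega, ← Finset.range_eq_Ico] at h
    rw [← h, majP, sub_sub_cancel, hIcc]
    refine Finset.sum_congr rfl fun j hj => ?_
    rw [Finset.mem_Ico] at hj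
    simp only [b, Nat.choose_symm (by omega : j ≤ m), Nat.sub_sub_self (by omega : j ≤ m)]
    ring
  have hbinom : ∑ j ∈ Finset.range (m + 1), b j = 1 := by
    have h := add_pow q (1 - q) m
    rw [add_sub_cancel, one_pow] at h
    rw [h]
    exact Finset.sum_congr rfl fun j _ => by ring
  rw [hreflect, majP, hIcc, add_comm, Finset.sum_range_add_sum_Ico _ (by omega), hbinom]

theorem majP_half (n : ℕ) : majP n (1/2) = 1/2 := by
  have h := majP_add_majP_one_sub n (1/2)
  norm_num at h
  linarith

theorem majP_nonneg (n : ℕ) {q : ℝ} (hq : q ∈ Icc (0:ℝ) 1) : 0 ≤ majP n q := by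
  have hq0 := hq.1
  have hq1 : 0 ≤ 1 - q := sub_nonneg.2 hq.2
  exact Finset.sum_nonneg fun j _ => by positivity

theorem majP_le_one (n : ℕ) {q : ℝ} (hq : q ∈ Icc (0:ℝ) 1) : majP n q ≤ 1 := by
  have h1q : 1 - q ∈ Icc (0:ℝ) 1 := ⟨sub_nonneg.2 hq.2, by linarith [hq.1]⟩
  linarith [majP_add_majP_one_sub n q, majP_nonneg n h1q]

theorem majP_le_exp (n : ℕ) {q : ℝ} (hq : q ∈ Icc (0:ℝ) (1/2)) :
    majP n q ≤ exp (-2 * (2 * n + 1) * (q - 1/2) ^ 2) := by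
  obtain ⟨hq0, hq⟩ := hq
  have hM : (0:ℝ) < 2 * n + 1 := by positivity
  have hgap0 : 0 ≤ (2 * n + 1) * (1/2 - q) := mul_nonneg hM.le (by linarith)
  have hgap : (2 * n + 1) * (1/2 - q) ≤ n + 1 - (2 * n + 1) * q := by linarith
  refine (sum_Icc_choose_mul_pow_le_exp_neg_sq (m := 2 * n + 1) (k := n + 1) (by omega)
    ⟨hq0, by linarith⟩ (by push_cast; nlinarith)).trans (exp_le_exp.2 ?_)
  push_cast
  rw [div_le_iff₀ hM]
  nlinarith [mul_le_mul hgap hgap hgap0 (hgap0.trans hgap)]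

-- `P_∞(q) = 1{q > 1/2} + 1/2 · 1{q = 1/2}`, cut off at `1` like `voteVinf`.
noncomputable def majLimit (q : ℝ) : ℝ :=
  (Ioc (1/2 : ℝ) 1).indicator 1 q + 1/2 * ({1/2} : Set ℝ).indicator 1 q

theorem integrable_majLimit (μ : Measure ℝ) [IsFiniteMeasure μ] : Integrable majLimit μ :=
  ((integrable_const 1).indicator measurableSet_Ioc).add
    (((integrable_const 1).indicator (measurableSet_singleton _)).const_mul _)

theorem integral_majLimit (μ : Measure ℝ) [IsFiniteMeasure μ] :
    ∫ q, majLimit q ∂μ = voteVinf μ := by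
  unfold majLimit
  rw [integral_add ((integrable_const 1).indicator measurableSet_Ioc)
    (((integrable_const 1).indicator (measurableSet_singleton _)).const_mul _),
    integral_const_mul, integral_indicator_one measurableSet_Ioc,
    integral_indicator_one (measurableSet_singleton _)]
  rfl

theorem abs_majP_sub_majLimit_le (n : ℕ) {q : ℝ} (hq : q ∈ Icc (0:ℝ) 1) :
    |majP n q - majLimit q| ≤ exp (-2 * (2 * n + 1) * (q - 1/2) ^ 2) := by
  rcases lt_trichotomy q (1/2) with hlt | rfl | hgt
  · rw [majLimit, indicator_of_notMem (fun h => by linarith [h.1]),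
      indicator_of_notMem (by simpa using hlt.ne), mul_zero, add_zero, sub_zero,
      abs_of_nonneg (majP_nonneg n hq)]
    exact majP_le_exp n ⟨hq.1, hlt.le⟩
  · rw [majLimit, indicator_of_notMem (by norm_num), indicator_of_mem (mem_singleton _),
      majP_half]
    norm_num
  · have h1q : 1 - q ∈ Icc (0:ℝ) (1/2) := ⟨sub_nonneg.2 hq.2, by linarith⟩
    rw [majLimit, indicator_of_mem (show q ∈ Ioc (1/2) 1 from ⟨hgt, hq.2⟩),
      indicator_of_notMem (by simpa using hgt.ne'), mul_zero, add_zero, Pi.one_apply,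
      show majP n q - 1 = -majP n (1 - q) by linarith [majP_add_majP_one_sub n q], abs_neg,
      abs_of_nonneg (majP_nonneg n ⟨h1q.1, by linarith [h1q.2]⟩)]
    convert majP_le_exp n h1q using 3
    ring

/-- Threshold-margin bridge: a local margin condition near `q = 1/2` gives the endpoint
rate `exp(−2M t₀²) + C Γ(1+κ/2) (2M)^{−κ/2}` with `M = 2n+1`. -/
theorem stmt11 (μ : Measure ℝ) [IsProbabilityMeasure μ] (hμ : μ (Set.Icc (0:ℝ) 1)ᶜ = 0)
    (C κ t₀ : ℝ) (hC : 0 < C) (hκ : 0 < κ) (ht₀ : t₀ ∈ Set.Ioc (0:ℝ) (1/2))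
    (hmargin : ∀ t : ℝ, 0 < t → t < t₀ →
      (μ {q : ℝ | |q - 1/2| ≤ t}).toReal ≤ C * t ^ κ) :
    ∀ n : ℕ, |voteV μ n - voteVinf μ| ≤
      Real.exp (-2 * (2*n+1) * t₀^2) +
        C * Real.Gamma (1 + κ/2) * (2*(2*n+1) : ℝ) ^ (-(κ/2)) := by
  intro n
  set a : ℝ := 2 * (2 * n + 1)
  have hae : ∀ᵐ q ∂μ, q ∈ Icc (0:ℝ) 1 := ae_iff.2 hμ
  have hmajP : Integrable (majP n) μ :=
    Integrable.of_mem_Icc 0 1 (by unfold majP; fun_prop)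
      (hae.mono fun q hq => ⟨majP_nonneg n hq, majP_le_one n hq⟩)
  have hgauss : Integrable (fun q => exp (-a * |q - 1/2| ^ 2)) μ :=
    Integrable.of_mem_Icc 0 1 (by fun_prop) (Eventually.of_forall fun q =>
      ⟨(exp_pos _).le, exp_le_one_iff.2 (mul_nonpos_of_nonpos_of_nonneg
        (neg_nonpos.2 (by positivity)) (sq_nonneg _))⟩)
  calc |voteV μ n - voteVinf μ| = ‖∫ q, (majP n q - majLimit q) ∂μ‖ := by
        rw [integral_sub hmajP (integrable_majLimit μ), integral_majLimit]; rfl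
    _ ≤ ∫ q, exp (-a * |q - 1/2| ^ 2) ∂μ := norm_integral_le_of_norm_le hgauss
        (hae.mono fun q hq => by
          simpa only [sq_abs, Real.norm_eq_abs, a, neg_mul] using abs_majP_sub_majLimit_le n hq)
    _ ≤ exp (-a * t₀ ^ 2) + C * Gamma (1 + κ / 2) * a ^ (-(κ / 2)) :=
        integral_exp_neg_mul_sq_le_of_margin μ (by fun_prop) (fun _ => abs_nonneg _)
          (by positivity) hC.le (by linarith) ht₀.1.le hmargin
    _ = _ := by simp only [a]; ring_nf
end

section
/- For every fixed J ≥ 1 there exist two probability measures Π₁, Π₂ on [0,1] with identical raw moments E[Q^ℓ] for ℓ = 0,…,J (hence identical distributions of C ~ Bin(J,Q)), but with E_{Π₁}[(2Q−1)(Q(1−Q))^k] ≠ E_{Π₂}[(2Q−1)(Q(1−Q))^k] for some k > ⌊(J−1)/2⌋. -/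
/-! Take `n = 2k + 1` nodes `j / n`, `j = 0, …, n`, and the weights `(-1)^(n-j) * (n choose j)` of
the `n`-th forward difference. These weights annihilate every polynomial of degree `< n`, in
particular the moments `q^ℓ` for `ℓ ≤ 2k`, but not `(2q - 1)(q(1 - q))^k`, which has degree
exactly `n`. The positive and negative parts of this signed measure have equal mass, and after
normalisation they are the two probability measures. -/

open MeasureTheory Polynomial Finset

section ForwardDifference

variable {R : Type*} [CommRing R]

lemma sum_range_alternating_choose_mul_eval_mul (P : R[X]) (n : ℕ) (h : R) :
    ∑ j ∈ range (n + 1), (-1) ^ (n - j) * n.choose j * P.eval (h * j)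
      = (fwdDiff 1)^[n] (P.comp (C h * X)).eval 0 := by
  simp [fwdDiff_iter_eq_sum_shift, zsmul_eq_mul]

lemma sum_range_alternating_choose_mul_eval_mul_eq_zero {P : R[X]} {n : ℕ}
    (hP : P.natDegree < n) (h : R) :
    ∑ j ∈ range (n + 1), (-1) ^ (n - j) * n.choose j * P.eval (h * j) = 0 := by
  have hdeg : (P.comp (C h * X)).natDegree < n :=
    calc (P.comp (C h * X)).natDegree ≤ P.natDegree * 1 :=
          natDegree_comp_le.trans <| Nat.mul_le_mul_left _ <|
            (natDegree_C_mul_le _ _).trans natDegree_X_le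
      _ < n := by rwa [mul_one]
  rw [sum_range_alternating_choose_mul_eval_mul, fwdDiff_iter_eq_zero_of_degree_lt hdeg,
    Pi.zero_apply]

lemma sum_range_alternating_choose_mul_eval_mul_ne_zero [NoZeroDivisors R] [CharZero R]
    {P : R[X]} (hP : P ≠ 0) {h : R} (hh : h ≠ 0) :
    ∑ j ∈ range (P.natDegree + 1), (-1) ^ (P.natDegree - j) * P.natDegree.choose j
      * P.eval (h * j) ≠ 0 := by
  have hdeg : (P.comp (C h * X)).natDegree = P.natDegree := by
    rw [natDegree_comp, natDegree_C_mul_X h hh, mul_one]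
  rw [sum_range_alternating_choose_mul_eval_mul, ← hdeg, fwdDiff_iter_degree_eq_factorial]
  simp [leadingCoeff_comp, hP, hh, Nat.factorial_ne_zero]

end ForwardDifference

section AtomicMeasure

variable {α ι : Type*} [MeasurableSpace α]

noncomputable def atomicMeasure (s : Finset ι) (w : ι → ℝ) (x : ι → α) : Measure α :=
  ∑ j ∈ s, ENNReal.ofReal (w j) • Measure.dirac (x j)

variable {s : Finset ι} {w : ι → ℝ} (x : ι → α)

lemma isProbabilityMeasure_atomicMeasure (hw : ∀ j ∈ s, 0 ≤ w j) (hw₁ : ∑ j ∈ s, w j = 1) :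
    IsProbabilityMeasure (atomicMeasure s w x) := by
  constructor
  simp [atomicMeasure, ← ENNReal.ofReal_sum_of_nonneg hw, hw₁]

variable [MeasurableSingletonClass α]

lemma atomicMeasure_compl_eq_zero {A : Set α} (hx : ∀ j ∈ s, x j ∈ A) :
    atomicMeasure s w x Aᶜ = 0 := by
  simp +contextual [atomicMeasure, Measure.dirac_apply, hx]

lemma integral_atomicMeasure (hw : ∀ j ∈ s, 0 ≤ w j) (f : α → ℝ) :
    ∫ a, f a ∂atomicMeasure s w x = ∑ j ∈ s, w j * f (x j) := by
  rw [atomicMeasure, integral_finsetSum_measure fun j _ ↦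
    (integrable_dirac ENNReal.coe_lt_top).smul_measure ENNReal.ofReal_ne_top]
  refine sum_congr rfl fun j hj ↦ ?_
  rw [integral_smul_measure, integral_dirac, ENNReal.toReal_ofReal (hw j hj), smul_eq_mul]

theorem exists_isProbabilityMeasure_integral_sub_eq {c : ι → ℝ} {A : Set α}
    (hx : ∀ j ∈ s, x j ∈ A) (hc : ∑ j ∈ s, c j = 0) (hc₀ : ∃ j ∈ s, c j ≠ 0) :
    ∃ μ₁ μ₂ : Measure α, IsProbabilityMeasure μ₁ ∧ IsProbabilityMeasure μ₂ ∧
      μ₁ Aᶜ = 0 ∧ μ₂ Aᶜ = 0 ∧ ∃ t : ℝ, 0 < t ∧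
        ∀ f : α → ℝ, ∫ a, f a ∂μ₁ - ∫ a, f a ∂μ₂ = t * ∑ j ∈ s, c j * f (x j) := by
  set S := ∑ j ∈ s, (c j)⁺
  have hS : ∑ j ∈ s, (c j)⁻ = S := by
    rw [← sub_eq_zero, ← sum_sub_distrib]
    simpa using hc
  have hS₀ : 0 < S := by
    obtain ⟨j, hj, hcj⟩ := hc₀
    have h := (abs_pos.2 hcj).trans_le (single_le_sum (fun i _ ↦ abs_nonneg (c i)) hj)
    rw [← sum_congr rfl fun i _ ↦ posPart_add_negPart (c i), sum_add_distrib, hS] at h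
    linarith
  have hpos : ∀ j ∈ s, 0 ≤ (c j)⁺ / S := fun j _ ↦ div_nonneg (posPart_nonneg _) hS₀.le
  have hneg : ∀ j ∈ s, 0 ≤ (c j)⁻ / S := fun j _ ↦ div_nonneg (negPart_nonneg _) hS₀.le
  refine ⟨atomicMeasure s (fun j ↦ (c j)⁺ / S) x, atomicMeasure s (fun j ↦ (c j)⁻ / S) x,
    isProbabilityMeasure_atomicMeasure x hpos ?_, isProbabilityMeasure_atomicMeasure x hneg ?_,
    atomicMeasure_compl_eq_zero x hx, atomicMeasure_compl_eq_zero x hx, S⁻¹, inv_pos.2 hS₀,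
    fun f ↦ ?_⟩
  · rw [← sum_div, div_self hS₀.ne']
  · rw [← sum_div, hS, div_self hS₀.ne']
  · simp only [integral_atomicMeasure x hpos, integral_atomicMeasure x hneg, ← sum_sub_distrib,
      mul_sum]
    refine sum_congr rfl fun j _ ↦ ?_
    linear_combination (S⁻¹ * f (x j)) * posPart_sub_negPart (c j)

end AtomicMeasure

noncomputable def signedSignature (k : ℕ) : ℝ[X] := (C 2 * X - 1) * (X * (1 - X)) ^ k

lemma eval_signedSignature (k : ℕ) (q : ℝ) :
    (signedSignature k).eval q = (2 * q - 1) * (q * (1 - q)) ^ k := by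
  simp [signedSignature]

lemma natDegree_signedSignature (k : ℕ) : (signedSignature k).natDegree = 2 * k + 1 := by
  unfold signedSignature
  compute_degree! <;> omega

lemma signedSignature_ne_zero (k : ℕ) : signedSignature k ≠ 0 :=
  ne_zero_of_natDegree_gt (n := 0) (by rw [natDegree_signedSignature]; omega)

theorem stmt18_general (J : ℕ) :
    ∃ (μ₁ μ₂ : Measure ℝ), IsProbabilityMeasure μ₁ ∧ IsProbabilityMeasure μ₂ ∧
      μ₁ (Set.Icc (0:ℝ) 1)ᶜ = 0 ∧ μ₂ (Set.Icc (0:ℝ) 1)ᶜ = 0 ∧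
      (∀ ℓ : ℕ, ℓ ≤ J → ∫ q, q^ℓ ∂μ₁ = ∫ q, q^ℓ ∂μ₂) ∧
      ∃ k : ℕ, (J-1)/2 < k ∧
        ∫ q, (2*q - 1) * (q*(1-q))^k ∂μ₁ ≠ ∫ q, (2*q - 1) * (q*(1-q))^k ∂μ₂ := by
  set k := (J - 1) / 2 + 1
  set n := 2 * k + 1
  set c : ℕ → ℝ := fun j ↦ (-1) ^ (n - j) * n.choose j
  set x : ℕ → ℝ := fun j ↦ (n : ℝ)⁻¹ * j
  have hx : ∀ j ∈ range (n + 1), x j ∈ Set.Icc (0 : ℝ) 1 := fun j hj ↦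
    ⟨by positivity, inv_mul_le_one_of_le₀ (mod_cast mem_range_succ_iff.1 hj) n.cast_nonneg⟩
  have hmoment : ∀ ℓ < n, ∑ j ∈ range (n + 1), c j * x j ^ ℓ = 0 := fun ℓ hℓ ↦ by
    simpa using sum_range_alternating_choose_mul_eval_mul_eq_zero (P := X ^ ℓ)
      (by rwa [natDegree_X_pow]) (n : ℝ)⁻¹
  have hsignature : ∑ j ∈ range (n + 1), c j * ((2 * x j - 1) * (x j * (1 - x j)) ^ k) ≠ 0 := by
    have h := sum_range_alternating_choose_mul_eval_mul_ne_zero (signedSignature_ne_zero k)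
      (h := (n : ℝ)⁻¹) (by positivity)
    rw [natDegree_signedSignature] at h
    simpa only [eval_signedSignature] using h
  obtain ⟨μ₁, μ₂, h₁, h₂, hA₁, hA₂, t, ht, hdiff⟩ :=
    exists_isProbabilityMeasure_integral_sub_eq x hx (by simpa using hmoment 0 (Nat.succ_pos _))
      ⟨n, self_mem_range_succ n, by simp [c]⟩
  refine ⟨μ₁, μ₂, h₁, h₂, hA₁, hA₂, fun ℓ hℓ ↦ ?_, k, by omega, ?_⟩
  · rw [← sub_eq_zero, hdiff, hmoment ℓ (by omega), mul_zero]
  · rw [Ne, ← sub_eq_zero, hdiff]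
    exact mul_ne_zero ht.ne' hsignature

/-- Fixed-depth nonidentification: for each `J` there are two latent laws on `[0,1]`
with the same first `J` raw moments (hence the same `Bin(J,Q)` count distribution) but
different signed signature moments beyond the identified prefix. -/
theorem stmt18 (J : ℕ) (hJ : 1 ≤ J) :
    ∃ (μ₁ μ₂ : Measure ℝ), IsProbabilityMeasure μ₁ ∧ IsProbabilityMeasure μ₂ ∧
      μ₁ (Set.Icc (0:ℝ) 1)ᶜ = 0 ∧ μ₂ (Set.Icc (0:ℝ) 1)ᶜ = 0 ∧
      (∀ ℓ : ℕ, ℓ ≤ J → ∫ q, q^ℓ ∂μ₁ = ∫ q, q^ℓ ∂μ₂) ∧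
      ∃ k : ℕ, (J-1)/2 < k ∧
        ∫ q, (2*q - 1) * (q*(1-q))^k ∂μ₁ ≠ ∫ q, (2*q - 1) * (q*(1-q))^k ∂μ₂ :=
  stmt18_general J
end
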